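/- The 2-dissection identity f₁⁴ = f₄¹⁰ / (f₂² f₈⁴) − 4q f₂² f₈⁴ / f₄² holds as an identity of formal power series. -/

import Mathlib

open PowerSeries

/-- `f m` is the eta-type product `(q^m; q^m)_∞ = ∏_{k ≥ 1} (1 - q^{m k})`,
realized as a formal power series over ℚ: its `n`-th coefficient is that of the
stabilized partial product. -/
noncomputable def f (m : ℕ) : PowerSeries ℚ :=
  PowerSeries.mk fun n => PowerSeries.coeff n
    (∏ k ∈ Finset.range (n + 1), (1 - (PowerSeries.X : PowerSeries ℚ) ^ (m * (k + 1))))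

/-!
Gauss's identities `f_m² = f_{2m} φ(-q^m)` and `ψ(q^{2m}) f_{2m} = f_{4m}²` are the
specializations `z = -1` and `z = q` of Jacobi's triple product. We prove them from its finite
form (Cauchy's identity with Gaussian binomial coefficients) by letting the size of the product
tend to infinity one coefficient at a time. Two identities for sums of two squares, proved by
rotating and reflecting lattice points, give `φ(q) φ(-q) = φ(-q²)²` and
`φ(-q)² = φ(q²)² - 4q φ(q⁴) ψ(q⁸)`. Eliminating theta functions, `φ(q²)² = f_4¹⁰ / (f_2⁴ f_8⁴)`
and `φ(q⁴) ψ(q⁸) = f_8⁴ / f_4²`, so `f_1⁴ = f_2² φ(-q)²` becomes the stated 2-dissection.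
-/

open Finset

namespace QSeries

section QBinomial

variable {A : Type*} [CommRing A] (Q : A)

def qBinom : ℕ → ℕ → A
  | _, 0 => 1
  | 0, _ + 1 => 0
  | n + 1, k + 1 => qBinom n (k + 1) + Q ^ (n - k) * qBinom n k

@[simp] lemma qBinom_zero_right (n : ℕ) : qBinom Q n 0 = 1 := by cases n <;> rfl

@[simp] lemma qBinom_zero_succ (k : ℕ) : qBinom Q 0 (k + 1) = 0 := rfl

lemma qBinom_succ_succ (n k : ℕ) :
    qBinom Q (n + 1) (k + 1) = qBinom Q n (k + 1) + Q ^ (n - k) * qBinom Q n k := rfl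

lemma qBinom_eq_zero_of_lt {n k : ℕ} (h : n < k) : qBinom Q n k = 0 := by
  induction n generalizing k with
  | zero => obtain ⟨k, rfl⟩ := Nat.exists_eq_succ_of_ne_zero (by omega : k ≠ 0); rfl
  | succ n ih =>
    obtain ⟨k, rfl⟩ := Nat.exists_eq_succ_of_ne_zero (by omega : k ≠ 0)
    rw [qBinom_succ_succ, ih (by omega), ih (by omega), mul_zero, add_zero]

@[simp] lemma qBinom_self (n : ℕ) : qBinom Q n n = 1 := by
  induction n with
  | zero => rfl
  | succ n ih => rw [qBinom_succ_succ, qBinom_eq_zero_of_lt Q (by omega), ih, Nat.sub_self]; simp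

lemma qBinom_succ_succ' (n k : ℕ) :
    qBinom Q (n + 1) (k + 1) = Q ^ (k + 1) * qBinom Q n (k + 1) + qBinom Q n k := by
  induction n generalizing k with
  | zero => cases k <;> simp [qBinom_succ_succ]
  | succ n ih =>
    have pascal (k : ℕ) := qBinom_succ_succ Q (n + 1) k
    cases k with
    | zero =>
      have h₁ := pascal 0
      have h₂ := ih 0
      have h₃ := qBinom_succ_succ Q n 0
      simp only [Nat.sub_zero, qBinom_zero_right] at h₁ h₂ h₃ ⊢
      linear_combination h₁ + h₂ - Q * h₃
    | succ k =>
      rcases lt_or_ge n (k + 1) with h | h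
      · simp [pascal, Nat.sub_eq_zero_of_le (by omega : n ≤ k),
          qBinom_eq_zero_of_lt Q (by omega : n + 1 < k + 2)]
      · have hpow : Q ^ (k + 2) * Q ^ (n - (k + 1)) = Q ^ (n - k) * Q ^ (k + 1) := by
          rw [← pow_add, ← pow_add]; congr 1; omega
        have := pascal (k + 1)
        simp only [Nat.add_sub_add_right] at this
        linear_combination this + ih (k + 1) + Q ^ (n - k) * ih k
          - Q ^ (k + 2) * qBinom_succ_succ Q n (k + 1) - qBinom_succ_succ Q n k
          - qBinom Q n (k + 1) * hpow

lemma qBinom_add_two_one (n : ℕ) :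
    qBinom Q (n + 2) 1 = Q * qBinom Q n 1 + (1 + Q ^ (n + 1)) := by
  rw [qBinom_succ_succ' Q (n + 1) 0, qBinom_succ_succ Q n 0]
  simp only [zero_add, pow_one, Nat.sub_zero, qBinom_zero_right]
  ring

lemma qBinom_add_two_add_two (n j : ℕ) :
    qBinom Q (n + 2) (j + 2) = Q ^ (j + 2) * qBinom Q n (j + 2)
      + (1 + Q ^ (n + 1)) * qBinom Q n (j + 1) + Q ^ (n - j) * qBinom Q n j := by
  rw [qBinom_succ_succ' Q (n + 1) (j + 1), qBinom_succ_succ Q n (j + 1), qBinom_succ_succ Q n j]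
  rcases lt_or_ge n (j + 1) with h | h
  · rw [qBinom_eq_zero_of_lt Q h]; ring
  · have hpow : Q ^ (j + 1 + 1) * Q ^ (n - (j + 1)) = Q ^ (n + 1) := by
      rw [← pow_add]; congr 1; omega
    linear_combination qBinom Q n (j + 1) * hpow

def qPoch (n : ℕ) : A := ∏ k ∈ range n, (1 - Q ^ (k + 1))

lemma qPoch_succ (n : ℕ) : qPoch Q (n + 1) = qPoch Q n * (1 - Q ^ (n + 1)) :=
  prod_range_succ _ _

lemma qPoch_add (a b : ℕ) : qPoch Q (a + b) = qPoch Q a * ∏ k ∈ range b, (1 - Q ^ (a + k + 1)) :=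
  prod_range_add _ _ _

lemma qPoch_two_mul (n : ℕ) :
    qPoch Q (2 * n) = qPoch (Q ^ 2) n * ∏ k ∈ range n, (1 - Q ^ (2 * k + 1)) := by
  induction n with
  | zero => simp [qPoch]
  | succ n ih =>
    rw [show 2 * (n + 1) = 2 * n + 1 + 1 by ring, qPoch_succ, qPoch_succ, ih, qPoch_succ,
      prod_range_succ]
    ring

lemma qPoch_mul_prod_one_add (n : ℕ) :
    qPoch Q n * ∏ k ∈ range n, (1 + Q ^ (k + 1)) = qPoch (Q ^ 2) n := by
  rw [qPoch, qPoch, ← prod_mul_distrib]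
  exact prod_congr rfl fun k _ ↦ by ring

lemma qBinom_mul_qPoch_mul_qPoch {n k : ℕ} (h : k ≤ n) :
    qBinom Q n k * qPoch Q k * qPoch Q (n - k) = qPoch Q n := by
  induction n generalizing k with
  | zero =>
    obtain rfl : k = 0 := by omega
    simp [qPoch]
  | succ n ih =>
    cases k with
    | zero => simp [qPoch]
    | succ k =>
      rcases eq_or_lt_of_le h with h | h
      · obtain rfl : k = n := by omega
        simp [qPoch]
      obtain ⟨r, rfl⟩ : ∃ r, n = k + 1 + r := ⟨n - (k + 1), by omega⟩
      have h₁ := ih (k := k + 1) (by omega)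
      have h₂ := ih (k := k) (by omega)
      rw [show k + 1 + r - (k + 1) = r by omega] at h₁
      rw [show k + 1 + r - k = r + 1 by omega] at h₂
      rw [show k + 1 + r + 1 - (k + 1) = r + 1 by omega, qBinom_succ_succ,
        show k + 1 + r - k = r + 1 by omega]
      simp only [qPoch_succ] at h₁ h₂ ⊢
      linear_combination (1 - Q ^ (r + 1)) * h₁ + Q ^ (r + 1) * (1 - Q ^ (k + 1)) * h₂

end QBinomial

section JacobiTripleProduct

variable {A : Type*} [CommRing A] (q : A)

def jacobiCoeff (N i : ℕ) : A := qBinom (q ^ 2) (2 * N) i * q ^ ((i : ℤ) - N).natAbs ^ 2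

lemma pow_mul_pow_eq_pow_mul_sq_pow {a b c d : ℕ} (h : a + b = c + 2 * d) :
    q ^ a * q ^ b = q ^ c * (q ^ 2) ^ d := by
  rw [← pow_add, ← pow_mul, ← pow_add, h]

lemma jacobiCoeff_succ_zero (N : ℕ) :
    jacobiCoeff q (N + 1) 0 = q ^ (2 * N + 1) * jacobiCoeff q N 0 := by
  simp only [jacobiCoeff, qBinom_zero_right, one_mul, ← pow_add]
  congr 1
  zify
  simp only [sq_abs]
  ring

lemma jacobiCoeff_succ_one (N : ℕ) :
    jacobiCoeff q (N + 1) 1 = q ^ (2 * N + 1) * jacobiCoeff q N 1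
      + (1 + (q ^ 2) ^ (2 * N + 1)) * jacobiCoeff q N 0 := by
  have hpow : q ^ (2 * N + 1) * q ^ ((1 : ℤ) - N).natAbs ^ 2
      = q ^ ((0 : ℤ) - N).natAbs ^ 2 * (q ^ 2) ^ 1 := by
    apply pow_mul_pow_eq_pow_mul_sq_pow
    zify
    simp only [sq_abs]
    ring
  simp only [jacobiCoeff, show 2 * (N + 1) = 2 * N + 2 by ring, qBinom_add_two_one,
    qBinom_zero_right]
  push_cast
  rw [show (1 : ℤ) - (N + 1 : ℤ) = 0 - N by ring]
  linear_combination -qBinom (q ^ 2) (2 * N) 1 * hpow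

lemma jacobiCoeff_succ_add_two (N j : ℕ) :
    jacobiCoeff q (N + 1) (j + 2) = q ^ (2 * N + 1) * jacobiCoeff q N (j + 2)
      + (1 + (q ^ 2) ^ (2 * N + 1)) * jacobiCoeff q N (j + 1)
      + q ^ (2 * N + 1) * jacobiCoeff q N j := by
  have hpow₁ : q ^ (2 * N + 1) * q ^ ((j + 2 : ℕ) - N : ℤ).natAbs ^ 2
      = q ^ ((j + 1 : ℕ) - N : ℤ).natAbs ^ 2 * (q ^ 2) ^ (j + 2) := by
    apply pow_mul_pow_eq_pow_mul_sq_pow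
    zify
    simp only [sq_abs]
    ring
  simp only [jacobiCoeff, show 2 * (N + 1) = 2 * N + 2 by ring, qBinom_add_two_add_two]
  rw [show ((j + 2 : ℕ) : ℤ) - (N + 1 : ℕ) = (j + 1 : ℕ) - N by push_cast; ring]
  rcases lt_or_ge (2 * N) j with h | h
  · rw [qBinom_eq_zero_of_lt _ h]
    linear_combination -qBinom (q ^ 2) (2 * N) (j + 2) * hpow₁
  · have hpow₂ : q ^ (2 * N + 1) * q ^ ((j : ℤ) - N).natAbs ^ 2
        = q ^ ((j + 1 : ℕ) - N : ℤ).natAbs ^ 2 * (q ^ 2) ^ (2 * N - j) := by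
      apply pow_mul_pow_eq_pow_mul_sq_pow
      zify [h]
      simp only [sq_abs]
      ring
    linear_combination -qBinom (q ^ 2) (2 * N) (j + 2) * hpow₁
      - qBinom (q ^ 2) (2 * N) j * hpow₂

noncomputable def jacobiPoly (N : ℕ) : Polynomial A :=
  ∏ k ∈ range N, (1 + Polynomial.C (q ^ (2 * k + 1)) * Polynomial.X)
    * (Polynomial.X + Polynomial.C (q ^ (2 * k + 1)))

lemma coeff_jacobiPoly (N i : ℕ) : (jacobiPoly q N).coeff i = jacobiCoeff q N i := by
  induction N generalizing i with
  | zero => rcases i with _ | i <;> simp [jacobiPoly, jacobiCoeff, Polynomial.coeff_one]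
  | succ N ih =>
    set a := q ^ (2 * N + 1)
    have hfactor : jacobiPoly q (N + 1) = Polynomial.C a * jacobiPoly q N
        + Polynomial.C (1 + (q ^ 2) ^ (2 * N + 1)) * (jacobiPoly q N * Polynomial.X ^ 1)
        + Polynomial.C a * (jacobiPoly q N * Polynomial.X ^ 2) := by
      rw [jacobiPoly, prod_range_succ, ← jacobiPoly]
      simp only [map_add, map_one, map_pow, a]
      ring
    rw [hfactor]
    simp only [Polynomial.coeff_add, Polynomial.coeff_C_mul, Polynomial.coeff_mul_X_pow', ih]
    rcases i with _ | _ | j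
    · simp [jacobiCoeff_succ_zero, a]
    · simp [jacobiCoeff_succ_one, a]
    · simp [jacobiCoeff_succ_add_two, a]

/-- The finite form of Jacobi's triple product identity (Cauchy). -/
theorem prod_range_jacobi_eq_sum (z : A) (N : ℕ) :
    ∏ k ∈ range N, (1 + q ^ (2 * k + 1) * z) * (z + q ^ (2 * k + 1))
      = ∑ i ∈ range (2 * N + 1), jacobiCoeff q N i * z ^ i := by
  have hdeg : (jacobiPoly q N).natDegree < 2 * N + 1 := by
    rw [Nat.lt_succ_iff, Polynomial.natDegree_le_iff_coeff_eq_zero]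
    intro i hi
    rw [coeff_jacobiPoly, jacobiCoeff, qBinom_eq_zero_of_lt _ hi, zero_mul]
  have heval : (jacobiPoly q N).eval z
      = ∏ k ∈ range N, (1 + q ^ (2 * k + 1) * z) * (z + q ^ (2 * k + 1)) := by
    simp [jacobiPoly, Polynomial.eval_prod]
  simp only [← heval, Polynomial.eval_eq_sum_range' hdeg, coeff_jacobiPoly]

lemma sq_prod_one_sub_odd_pow (N : ℕ) :
    (∏ k ∈ range N, (1 - q ^ (2 * k + 1))) ^ 2
      = ∑ i ∈ range (2 * N + 1), jacobiCoeff q N i * (-1) ^ (N + i) := by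
  have h := prod_range_jacobi_eq_sum q (-1) N
  have hprod : ∏ k ∈ range N, (1 + q ^ (2 * k + 1) * -1) * (-1 + q ^ (2 * k + 1))
      = (-1) ^ N * (∏ k ∈ range N, (1 - q ^ (2 * k + 1))) ^ 2 := by
    rw [← prod_pow, ← card_range N, ← prod_const, card_range, ← prod_mul_distrib]
    exact prod_congr rfl fun k _ ↦ by ring
  have hsum : ∑ i ∈ range (2 * N + 1), jacobiCoeff q N i * (-1) ^ (N + i)
      = (-1) ^ N * ∑ i ∈ range (2 * N + 1), jacobiCoeff q N i * (-1) ^ i := by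
    rw [mul_sum]
    exact sum_congr rfl fun i _ ↦ by ring
  rw [hsum, ← h, hprod, ← mul_assoc, ← pow_add, Even.neg_one_pow ⟨N, rfl⟩, one_mul]

lemma qPoch_two_mul_sq (N : ℕ) :
    qPoch q (2 * N) ^ 2 = qPoch (q ^ 2) N
      * (qPoch (q ^ 2) N * ∑ i ∈ range (2 * N + 1), jacobiCoeff q N i * (-1) ^ (N + i)) := by
  rw [qPoch_two_mul, mul_pow, sq_prod_one_sub_odd_pow]
  ring

lemma qPoch_mul_sum_jacobiCoeff_mul_pow (N : ℕ) :
    qPoch (q ^ 2) (N + 1) * ∑ i ∈ range (2 * (N + 1) + 1), jacobiCoeff q (N + 1) i * q ^ i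
      = q ^ (N + 1) * (2 * (qPoch ((q ^ 2) ^ 2) (N + 1)
        * ∏ k ∈ range N, (1 + (q ^ 2) ^ (k + 1)))) := by
  have hq : ∏ k ∈ range (N + 1), (1 + q ^ (2 * k + 1) * q) * (q + q ^ (2 * k + 1))
      = q ^ (N + 1) * ((∏ k ∈ range (N + 1), (1 + (q ^ 2) ^ (k + 1)))
        * ∏ k ∈ range (N + 1), (1 + (q ^ 2) ^ k)) := by
    rw [← prod_mul_distrib, ← card_range (N + 1), ← prod_const, card_range, ← prod_mul_distrib]
    exact prod_congr rfl fun k _ ↦ by ring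
  rw [← prod_range_jacobi_eq_sum, hq, ← qPoch_mul_prod_one_add (q ^ 2) (N + 1),
    prod_range_succ' (fun k ↦ 1 + (q ^ 2) ^ k) N]
  ring

end JacobiTripleProduct

section Congruence

variable {R : Type*} [CommRing R]

lemma smodEq_span_singleton_iff {a b x : R} : a ≡ b [SMOD Ideal.span {x}] ↔ x ∣ a - b :=
  SModEq.sub_mem.trans Ideal.mem_span_singleton

lemma pow_dvd_prod_one_sub_pow_sub_one {Q : R} {ι : Type*} (s : Finset ι) {e : ι → ℕ} {a : ℕ}
    (h : ∀ k ∈ s, a ≤ e k) : Q ^ a ∣ ∏ k ∈ s, (1 - Q ^ e k) - 1 := by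
  have := SModEq.prod (I := Ideal.span {Q ^ a}) (x := fun k ↦ 1 - Q ^ e k) (y := fun _ ↦ 1)
    fun k hk ↦ smodEq_span_singleton_iff.mpr <| by simpa using pow_dvd_pow Q (h k hk)
  simpa [smodEq_span_singleton_iff] using this

lemma smodEq_X_pow_iff {A B : R⟦X⟧} {n : ℕ} :
    A ≡ B [SMOD Ideal.span {(X : R⟦X⟧) ^ n}] ↔ ∀ i < n, coeff i A = coeff i B := by
  simp [smodEq_span_singleton_iff, X_pow_dvd_iff, sub_eq_zero]

lemma eq_of_forall_smodEq {A B : R⟦X⟧}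
    (h : ∀ n, A ≡ B [SMOD Ideal.span {(X : R⟦X⟧) ^ (n + 1)}]) : A = B :=
  ext fun n ↦ smodEq_X_pow_iff.mp (h n) n n.lt_succ_self

lemma mk_coeff_smodEq {P : ℕ → R⟦X⟧}
    (hP : ∀ i K K', i < K → K ≤ K' → coeff i (P K') = coeff i (P K)) {n K : ℕ} (hK : n < K) :
    PowerSeries.mk (fun i ↦ coeff i (P (i + 1))) ≡ P K [SMOD Ideal.span {(X : R⟦X⟧) ^ (n + 1)}] :=
  smodEq_X_pow_iff.mpr fun i hi ↦ by
    rw [coeff_mk]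
    exact (hP i (i + 1) K i.lt_succ_self (by omega)).symm

lemma smodEq_of_X_pow_mul_smodEq {A B : R⟦X⟧} {a b : ℕ}
    (h : X ^ a * A ≡ X ^ a * B [SMOD Ideal.span {(X : R⟦X⟧) ^ (a + b)}]) :
    A ≡ B [SMOD Ideal.span {(X : R⟦X⟧) ^ b}] := by
  obtain ⟨D, hD⟩ := smodEq_span_singleton_iff.mp h
  refine smodEq_span_singleton_iff.mpr ⟨D, X_pow_mul_injective (k := a) ?_⟩
  simp only [mul_sub, hD, pow_add, mul_assoc]

lemma coeff_mul_one_sub_X_pow {A : R⟦X⟧} {i e : ℕ} (h : i < e) :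
    coeff i (A * (1 - X ^ e)) = coeff i A := by
  simp [mul_sub, coeff_mul_X_pow', not_le.mpr h]

end Congruence

section IntegralDomain

variable {A : Type*} [CommRing A] [IsDomain A] {Q : A}

lemma qPoch_ne_zero (hQ : ¬IsOfFinOrder Q) (n : ℕ) : qPoch Q n ≠ 0 :=
  prod_ne_zero_iff.mpr fun k _ ↦ sub_ne_zero.mpr fun h ↦
    hQ (isOfFinOrder_iff_pow_eq_one.mpr ⟨k + 1, k.succ_pos, h.symm⟩)

/-- With `d = |i - K|`, the product `(Q;Q)_K [2K, i]_Q` equals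
`∏_{K-d < k ≤ K} (1 - Q^k) · ∏_{K+d < k ≤ 2K} (1 - Q^k)`. -/
lemma pow_dvd_qPoch_mul_qBinom_sub_one (hQ : ¬IsOfFinOrder Q) {K i : ℕ} (hi : i ≤ 2 * K) :
    Q ^ (K - ((i : ℤ) - K).natAbs + 1) ∣ qPoch Q K * qBinom Q (2 * K) i - 1 := by
  set d := ((i : ℤ) - K).natAbs
  set a := K - d
  have hprod : qBinom Q (2 * K) i * (qPoch Q a * qPoch Q (a + 2 * d)) = qPoch Q (2 * K) := by
    rw [← qBinom_mul_qPoch_mul_qPoch Q hi, mul_assoc]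
    congr 1
    rcases (by omega : (i = a ∧ 2 * K - i = a + 2 * d) ∨ (i = a + 2 * d ∧ 2 * K - i = a))
      with ⟨h₁, h₂⟩ | ⟨h₁, h₂⟩
    · rw [h₂, h₁]
    · rw [h₂, h₁, mul_comm]
  have hK := qPoch_add Q a d
  have h2K := qPoch_add Q (a + 2 * d) a
  rw [show a + d = K by omega] at hK
  rw [show a + 2 * d + a = 2 * K by omega] at h2K
  set P₁ := ∏ k ∈ range d, (1 - Q ^ (a + k + 1))
  set P₂ := ∏ k ∈ range a, (1 - Q ^ (a + 2 * d + k + 1))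
  have hfactor : qPoch Q K * qBinom Q (2 * K) i = P₁ * P₂ := by
    apply mul_right_cancel₀ (mul_ne_zero (qPoch_ne_zero hQ a) (qPoch_ne_zero hQ (a + 2 * d)))
    linear_combination qPoch Q K * hprod + qPoch Q K * h2K + qPoch Q (a + 2 * d) * P₂ * hK
  have hP₁ : Q ^ (a + 1) ∣ P₁ - 1 := pow_dvd_prod_one_sub_pow_sub_one _ fun k _ ↦ by omega
  have hP₂ : Q ^ (a + 1) ∣ P₂ - 1 := pow_dvd_prod_one_sub_pow_sub_one _ fun k _ ↦ by omega
  rw [hfactor, show P₁ * P₂ - 1 = (P₁ - 1) * P₂ + (P₂ - 1) by ring]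
  exact dvd_add (hP₁.mul_right _) hP₂

lemma pow_dvd_qPoch_mul_jacobiCoeff_sub {q : A} (hq : ¬IsOfFinOrder q) {K i : ℕ}
    (hi : i ≤ 2 * K) :
    q ^ (((i : ℤ) - K).natAbs ^ 2 + 2 * (K - ((i : ℤ) - K).natAbs + 1))
      ∣ qPoch (q ^ 2) K * jacobiCoeff q K i - q ^ ((i : ℤ) - K).natAbs ^ 2 := by
  have h := pow_dvd_qPoch_mul_qBinom_sub_one (Q := q ^ 2)
    (fun h ↦ hq (h.of_pow two_ne_zero)) hi
  rw [pow_add, pow_mul, jacobiCoeff, show ∀ x y z : A, x * (y * z) - z = z * (x * y - 1) by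
    intros; ring]
  exact mul_dvd_mul_left _ h

end IntegralDomain

lemma f_smodEq_qPoch {m n K : ℕ} (hm : 0 < m) (hK : n < K) :
    f m ≡ qPoch (X ^ m) K [SMOD Ideal.span {(X : ℚ⟦X⟧) ^ (n + 1)}] := by
  have hf : f m = PowerSeries.mk fun i ↦ coeff i (qPoch (X ^ m) (i + 1)) := by
    simp only [f, qPoch, pow_mul]
  rw [hf]
  refine mk_coeff_smodEq (fun i K K' hi hK' ↦ ?_) hK
  induction K', hK' using Nat.le_induction with
  | base => rfl
  | succ K' hK' ih =>
    rw [qPoch_succ, ← pow_mul, coeff_mul_one_sub_X_pow (by nlinarith), ih]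

section Theta

/-- The exponents `E` for which `∑_{j ∈ ℤ} c j q^{E j}` is a power series: `E j` is a natural
number, and only the indices `|j| ≤ n + 1` contribute to the coefficient of `q^n`. -/
def IsThetaExponent (E : ℤ → ℤ) : Prop := ∀ j, 0 ≤ E j ∧ (j.natAbs : ℤ) ≤ E j + 1

noncomputable def thetaPartial (c : ℤ → ℚ) (E : ℤ → ℤ) (K : ℕ) : ℚ⟦X⟧ :=
  ∑ j ∈ Icc (-(K : ℤ)) K, C (c j) * X ^ (E j).toNat

noncomputable def thetaSeries (c : ℤ → ℚ) (E : ℤ → ℤ) : ℚ⟦X⟧ :=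
  PowerSeries.mk fun n ↦ coeff n (thetaPartial c E (n + 1))

variable {c : ℤ → ℚ} {E : ℤ → ℤ}

lemma coeff_thetaPartial (hE : IsThetaExponent E) (n K : ℕ) :
    coeff n (thetaPartial c E K) = ∑ j ∈ Icc (-(K : ℤ)) K, if E j = n then c j else 0 := by
  simp only [thetaPartial, map_sum, coeff_C_mul_X_pow]
  exact sum_congr rfl fun j _ ↦ if_congr (by have := hE j; omega) rfl rfl

lemma thetaSeries_smodEq (hE : IsThetaExponent E) {n K : ℕ} (hK : n < K) :
    thetaSeries c E ≡ thetaPartial c E K [SMOD Ideal.span {(X : ℚ⟦X⟧) ^ (n + 1)}] := by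
  refine mk_coeff_smodEq (fun i K K' hi hK' ↦ ?_) hK
  simp only [coeff_thetaPartial hE]
  refine (sum_subset (Icc_subset_Icc (by omega) (by omega)) fun j hj hjK ↦ ?_).symm
  have := hE j
  simp only [mem_Icc] at hj hjK
  exact if_neg (by omega)

lemma IsThetaExponent.add_one (hE : IsThetaExponent E) : IsThetaExponent fun j ↦ E j + 1 :=
  fun j ↦ ⟨by linarith [hE j], by linarith [hE j]⟩

lemma X_mul_thetaSeries (hE : IsThetaExponent E) :
    X * thetaSeries c E = thetaSeries c fun j ↦ E j + 1 := by
  refine eq_of_forall_smodEq fun n ↦ ?_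
  have hpartial : X * thetaPartial c E (n + 1) = thetaPartial c (fun j ↦ E j + 1) (n + 1) := by
    rw [thetaPartial, thetaPartial, mul_sum]
    refine sum_congr rfl fun j _ ↦ ?_
    rw [show (E j + 1).toNat = (E j).toNat + 1 by have := hE j; omega, pow_succ]
    ring
  calc X * thetaSeries c E ≡ X * thetaPartial c E (n + 1)
        [SMOD Ideal.span {(X : ℚ⟦X⟧) ^ (n + 1)}] :=
        SModEq.rfl.mul (thetaSeries_smodEq hE n.lt_succ_self)
    _ = thetaPartial c (fun j ↦ E j + 1) (n + 1) := hpartial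
    _ ≡ thetaSeries c fun j ↦ E j + 1 [SMOD Ideal.span {(X : ℚ⟦X⟧) ^ (n + 1)}] :=
        (thetaSeries_smodEq hE.add_one n.lt_succ_self).symm

lemma isThetaExponent_mul_sq {m : ℕ} (hm : 0 < m) : IsThetaExponent fun j ↦ m * j ^ 2 := by
  intro j
  dsimp only
  refine ⟨by positivity, ?_⟩
  rw [← Int.natAbs_sq j]
  have h : (j.natAbs : ℤ) ≤ (j.natAbs : ℤ) ^ 2 := by exact_mod_cast Nat.le_self_pow two_ne_zero _
  have hm : (1 : ℤ) ≤ m := by exact_mod_cast hm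
  nlinarith [sq_nonneg (j.natAbs : ℤ)]

lemma isThetaExponent_mul_pronic {m : ℕ} (hm : 0 < m) :
    IsThetaExponent fun j ↦ m * (j * (j + 1)) := by
  intro j
  have hpos : (1 : ℤ) ≤ m := by exact_mod_cast hm
  have h₀ : 0 ≤ j * (j + 1) := by nlinarith [sq_nonneg (2 * j + 1)]
  refine ⟨by positivity, ?_⟩
  rw [Int.natCast_natAbs]
  rcases le_or_gt 0 j with h | h
  · rw [abs_of_nonneg h]; nlinarith
  · rw [abs_of_neg h]; nlinarith

/-- Ramanujan's `φ(q^m)`. -/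
noncomputable def phi (m : ℕ) : ℚ⟦X⟧ := thetaSeries 1 fun j ↦ m * j ^ 2

/-- Ramanujan's `φ(-q^m)`. -/
noncomputable def phiNeg (m : ℕ) : ℚ⟦X⟧ := thetaSeries (fun j ↦ (-1) ^ j) fun j ↦ m * j ^ 2

/-- `2 ψ(q^{2m})`, for Ramanujan's `ψ(q) = ∑_{j ≥ 0} q^{j (j + 1) / 2}`. -/
noncomputable def twicePsi (m : ℕ) : ℚ⟦X⟧ := thetaSeries 1 fun j ↦ m * (j * (j + 1))

end Theta

section GaussIdentities

lemma sum_range_eq_sum_Icc {M : Type*} [AddCommMonoid M] (K : ℕ) (g : ℤ → M) :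
    ∑ i ∈ range (2 * K + 1), g (i - K) = ∑ j ∈ Icc (-(K : ℤ)) K, g j := by
  refine sum_nbij' (fun i ↦ (i : ℤ) - K) (fun j ↦ (j + K).toNat) ?_ ?_ ?_ ?_ ?_ <;>
    intro x hx <;> simp only [mem_range, mem_Icc] at * <;> omega

lemma neg_one_zpow_sub (i K : ℕ) : (-1 : ℚ) ^ ((i : ℤ) - K) = (-1) ^ (K + i) := by
  rcases Nat.even_or_odd (K + i) with ⟨r, hr⟩ | ⟨r, hr⟩
  · rw [Even.neg_one_pow ⟨r, hr⟩, Even.neg_one_zpow ⟨(r : ℤ) - K, by omega⟩]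
  · rw [Odd.neg_one_pow ⟨r, hr⟩, Odd.neg_one_zpow ⟨(r : ℤ) - K, by omega⟩]

lemma toNat_mul_sq (m : ℕ) (x : ℤ) : ((m : ℤ) * x ^ 2).toNat = m * x.natAbs ^ 2 := by
  rw [← Int.natAbs_sq x]
  exact_mod_cast Int.toNat_natCast _

lemma not_isOfFinOrder_X_pow {m : ℕ} (hm : 0 < m) : ¬IsOfFinOrder (X ^ m : ℚ⟦X⟧) := by
  rw [isOfFinOrder_iff_pow_eq_one]
  rintro ⟨k, hk, h⟩
  simpa [zero_pow hm.ne', zero_pow hk.ne'] using congrArg constantCoeff h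

/-- At `q = X^m`, `(q²;q²)_K` times the `i`-th finite Jacobi coefficient differs from its limit
`q^{(i-K)²}` by a series of order `m ((i-K)² + 2 (K - |i-K| + 1))`; `hw` asks that the weight
`w i` raise this to `e`. -/
lemma qPoch_mul_sum_jacobiCoeff_smodEq {m K e : ℕ} (hm : 0 < m) (w : ℕ → ℚ⟦X⟧)
    (hw : ∀ i ≤ 2 * K, X ^ e ∣
      X ^ (m * (((i : ℤ) - K).natAbs ^ 2 + 2 * (K - ((i : ℤ) - K).natAbs + 1))) * w i) :
    qPoch (X ^ (2 * m)) K * ∑ i ∈ range (2 * K + 1), jacobiCoeff (X ^ m) K i * w i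
      ≡ ∑ i ∈ range (2 * K + 1), X ^ (m * ((i : ℤ) - K).natAbs ^ 2) * w i
      [SMOD Ideal.span {(X : ℚ⟦X⟧) ^ e}] := by
  rw [mul_sum]
  refine SModEq.sum fun i hi ↦ smodEq_span_singleton_iff.mpr ?_
  have hi : i ≤ 2 * K := Nat.lt_succ_iff.mp (mem_range.mp hi)
  have h := pow_dvd_qPoch_mul_jacobiCoeff_sub (not_isOfFinOrder_X_pow hm) hi
  rw [← pow_mul, ← pow_mul, ← pow_mul, mul_comm m 2] at h
  rw [← mul_assoc, ← sub_mul]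
  exact (hw i hi).trans (mul_dvd_mul_right h _)

lemma thetaPartial_phiNeg_eq_sum (m K : ℕ) :
    thetaPartial (fun j ↦ (-1) ^ j) (fun j ↦ m * j ^ 2) K
      = ∑ i ∈ range (2 * K + 1), X ^ (m * ((i : ℤ) - K).natAbs ^ 2) * (-1 : ℚ⟦X⟧) ^ (K + i) := by
  rw [thetaPartial, ← sum_range_eq_sum_Icc]
  refine sum_congr rfl fun i _ ↦ ?_
  rw [neg_one_zpow_sub, toNat_mul_sq]
  simp [mul_comm]

lemma X_pow_mul_thetaPartial_twicePsi_eq_sum {m : ℕ} (hm : 0 < m) (K : ℕ) :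
    X ^ (m * K) * thetaPartial 1 (fun j ↦ m * (j * (j + 1))) K
      = ∑ i ∈ range (2 * K + 1), X ^ (m * ((i : ℤ) - K).natAbs ^ 2) * X ^ (m * i) := by
  rw [thetaPartial, mul_sum, ← sum_range_eq_sum_Icc]
  refine sum_congr rfl fun i _ ↦ ?_
  simp only [Pi.one_apply, map_one, one_mul, ← pow_add]
  congr 1
  have h₀ : 0 ≤ (m : ℤ) * (((i : ℤ) - K) * ((i : ℤ) - K + 1)) :=
    (isThetaExponent_mul_pronic hm _).1
  zify
  rw [Int.toNat_of_nonneg h₀, sq_abs]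
  ring

/-- Gauss; the case `z = -1` of the triple product identity. -/
theorem f_sq_eq_mul_phiNeg {m : ℕ} (hm : 0 < m) : f m ^ 2 = f (2 * m) * phiNeg m := by
  refine eq_of_forall_smodEq fun n ↦ ?_
  set K := n + 1
  have hlim := qPoch_mul_sum_jacobiCoeff_smodEq (K := K) (e := K) hm (fun i ↦ (-1) ^ (K + i))
    fun i _ ↦ Dvd.dvd.mul_right (pow_dvd_pow X <| by
      have := Nat.le_self_pow two_ne_zero ((i : ℤ) - K).natAbs
      have := Nat.le_mul_of_pos_left (((i : ℤ) - K).natAbs ^ 2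
        + 2 * (K - ((i : ℤ) - K).natAbs + 1)) hm
      omega) _
  calc f m ^ 2 ≡ qPoch (X ^ m) (2 * K) ^ 2 [SMOD Ideal.span {(X : ℚ⟦X⟧) ^ K}] :=
        (f_smodEq_qPoch hm (by omega)).pow 2
    _ = qPoch (X ^ (2 * m)) K * (qPoch (X ^ (2 * m)) K
        * ∑ i ∈ range (2 * K + 1), jacobiCoeff (X ^ m) K i * (-1) ^ (K + i)) := by
      rw [qPoch_two_mul_sq, ← pow_mul, mul_comm m 2]
    _ ≡ qPoch (X ^ (2 * m)) K * thetaPartial (fun j ↦ (-1) ^ j) (fun j ↦ m * j ^ 2) K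
        [SMOD Ideal.span {(X : ℚ⟦X⟧) ^ K}] := by
      rw [thetaPartial_phiNeg_eq_sum]
      exact SModEq.rfl.mul hlim
    _ ≡ f (2 * m) * phiNeg m [SMOD Ideal.span {(X : ℚ⟦X⟧) ^ K}] :=
      ((f_smodEq_qPoch (by omega) (by omega)).mul
        (thetaSeries_smodEq (isThetaExponent_mul_sq hm) (by omega))).symm

/-- Gauss; the case `z = q` of the triple product identity. -/
theorem twicePsi_mul_f {m : ℕ} (hm : 0 < m) : twicePsi m * f (2 * m) = 2 * f (4 * m) ^ 2 := by
  refine eq_of_forall_smodEq fun n ↦ ?_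
  set K := n + 2
  set Q : ℚ⟦X⟧ := X ^ (2 * m)
  have hQ : (X ^ m : ℚ⟦X⟧) ^ 2 = Q := by rw [← pow_mul, mul_comm]
  have hQ₂ : Q ^ 2 = X ^ (4 * m) := by rw [← pow_mul]; ring_nf
  set P := ∏ k ∈ range (n + 1), (1 + Q ^ (k + 1))
  have hprod := qPoch_mul_sum_jacobiCoeff_mul_pow (X ^ m : ℚ⟦X⟧) (n + 1)
  simp only [← pow_mul, hQ] at hprod
  have hlim := qPoch_mul_sum_jacobiCoeff_smodEq (K := K) (e := m * K + (n + 1)) hm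
    (fun i ↦ X ^ (m * i)) fun i _ ↦ by
      rw [← pow_add]
      refine pow_dvd_pow X ?_
      set d := ((i : ℤ) - K).natAbs
      have hd : 3 * d ≤ d ^ 2 + 2 := by
        rcases Nat.lt_or_ge d 2 with h | h
        · interval_cases d <;> simp
        · nlinarith
      have hY : K + (n + 1) ≤ d ^ 2 + 2 * (K - d + 1) + i := by omega
      nlinarith [Nat.mul_le_mul_left m hY]
  rw [hprod, hQ₂, ← X_pow_mul_thetaPartial_twicePsi_eq_sum hm] at hlim
  calc twicePsi m * f (2 * m)
      ≡ thetaPartial 1 (fun j ↦ m * (j * (j + 1))) K * qPoch Q (n + 1)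
        [SMOD Ideal.span {(X : ℚ⟦X⟧) ^ (n + 1)}] :=
        (thetaSeries_smodEq (isThetaExponent_mul_pronic hm) (by omega)).mul
          (f_smodEq_qPoch (by omega) (by omega))
    _ ≡ 2 * (qPoch (X ^ (4 * m)) K * P) * qPoch Q (n + 1)
        [SMOD Ideal.span {(X : ℚ⟦X⟧) ^ (n + 1)}] :=
        (smodEq_of_X_pow_mul_smodEq hlim).symm.mul SModEq.rfl
    _ = 2 * (qPoch (X ^ (4 * m)) K * qPoch (X ^ (4 * m)) (n + 1)) := by
      rw [← hQ₂, ← qPoch_mul_prod_one_add Q (n + 1)]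
      ring
    _ ≡ 2 * f (4 * m) ^ 2 [SMOD Ideal.span {(X : ℚ⟦X⟧) ^ (n + 1)}] := by
      rw [sq]
      exact (SModEq.rfl.mul ((f_smodEq_qPoch (by omega) (by omega)).mul
        (f_smodEq_qPoch (by omega) (by omega)))).symm

end GaussIdentities

section Lattice

variable {c₁ c₂ : ℤ → ℚ} {E E₁ E₂ : ℤ → ℤ}

noncomputable def latticePoints (E₁ E₂ : ℤ → ℤ) (n : ℕ) : Finset (ℤ × ℤ) :=
  (Icc (-((n + 1 : ℕ) : ℤ)) (n + 1 : ℕ) ×ˢ Icc (-((n + 1 : ℕ) : ℤ)) (n + 1 : ℕ)).filter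
    fun p ↦ E₁ p.1 + E₂ p.2 = n

lemma mem_latticePoints (hE₁ : IsThetaExponent E₁) (hE₂ : IsThetaExponent E₂) {n : ℕ}
    {p : ℤ × ℤ} : p ∈ latticePoints E₁ E₂ n ↔ E₁ p.1 + E₂ p.2 = n := by
  have := hE₁ p.1
  have := hE₂ p.2
  simp only [latticePoints, mem_filter, mem_product, mem_Icc]
  omega

lemma coeff_thetaSeries_mul (hE₁ : IsThetaExponent E₁) (hE₂ : IsThetaExponent E₂) (n : ℕ) :
    coeff n (thetaSeries c₁ E₁ * thetaSeries c₂ E₂)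
      = ∑ p ∈ latticePoints E₁ E₂ n, c₁ p.1 * c₂ p.2 := by
  rw [smodEq_X_pow_iff.mp ((thetaSeries_smodEq hE₁ n.lt_succ_self).mul
    (thetaSeries_smodEq hE₂ n.lt_succ_self)) n n.lt_succ_self, latticePoints, sum_filter,
    thetaPartial, thetaPartial, sum_mul_sum, ← sum_product', map_sum]
  refine sum_congr rfl fun p _ ↦ ?_
  rw [← mul_mul_mul_comm, ← map_mul, ← pow_add, coeff_C_mul_X_pow]
  exact if_congr (by have := hE₁ p.1; have := hE₂ p.2; omega) rfl rfl

lemma sum_latticePoints_swap {M : Type*} [AddCommMonoid M] (P : ℤ × ℤ → Prop) [DecidablePred P]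
    (n : ℕ) (g : ℤ × ℤ → M) :
    ∑ p ∈ (latticePoints E E n).filter P, g p
      = ∑ p ∈ (latticePoints E E n).filter (fun p ↦ P p.swap), g p.swap := by
  refine sum_nbij' Prod.swap Prod.swap ?_ ?_ (fun _ _ ↦ rfl) (fun _ _ ↦ rfl) (fun _ _ ↦ rfl) <;>
  · intro p hp
    simp only [latticePoints, mem_filter, mem_product, mem_Icc, Prod.fst_swap, Prod.snd_swap,
      Prod.swap_swap] at hp ⊢
    exact ⟨⟨⟨hp.1.1.2, hp.1.1.1⟩, by rw [add_comm]; exact hp.1.2⟩, hp.2⟩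

/-- The rotation `(a, b) ↦ (a + b, a - b)` maps the solutions of `2m(a² + b²) = n` onto those of
`m(x² + y²) = n` with `x ≡ y (mod 2)`. -/
lemma sum_latticePoints_rotate {m : ℕ} (hm : 0 < m) (n : ℕ) (g : ℤ × ℤ → ℚ) :
    ∑ p ∈ latticePoints (fun j ↦ (2 * m : ℕ) * j ^ 2) (fun j ↦ (2 * m : ℕ) * j ^ 2) n,
        g (p.1 + p.2, p.1 - p.2)
      = ∑ p ∈ (latticePoints (fun j ↦ m * j ^ 2) (fun j ↦ m * j ^ 2) n).filter
          (fun p ↦ Even (p.1 + p.2)), g p := by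
  have h₁ := isThetaExponent_mul_sq hm
  have h₂ := isThetaExponent_mul_sq (by omega : 0 < 2 * m)
  refine sum_nbij' (fun p ↦ (p.1 + p.2, p.1 - p.2)) (fun p ↦ ((p.1 + p.2) / 2, (p.1 - p.2) / 2))
    ?_ ?_ ?_ ?_ (fun _ _ ↦ rfl)
  · intro p hp
    simp only [mem_filter, mem_latticePoints h₁ h₁, mem_latticePoints h₂ h₂] at hp ⊢
    push_cast at hp
    exact ⟨by linear_combination hp, ⟨p.1, by ring⟩⟩
  · intro p hp
    simp only [mem_filter, mem_latticePoints h₁ h₁, mem_latticePoints h₂ h₂] at hp ⊢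
    obtain ⟨hp, r, hr⟩ := hp
    rw [show (p.1 + p.2) / 2 = r by omega, show (p.1 - p.2) / 2 = p.1 - r by omega]
    push_cast
    linear_combination hp + (m : ℤ) * (p.1 - p.2 - 2 * r) * hr
  · intro p _
    simp only [Prod.ext_iff]
    omega
  · intro p hp
    simp only [mem_filter] at hp
    obtain ⟨r, hr⟩ := hp.2
    simp only [Prod.ext_iff]
    omega

lemma sum_latticePoints_odd (n : ℕ) (g : ℤ × ℤ → ℚ) :
    ∑ p ∈ latticePoints (fun j ↦ 4 * j ^ 2 + 1) (fun j ↦ 4 * (j * (j + 1))) n,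
        g (2 * p.1, 2 * p.2 + 1)
      = ∑ p ∈ (latticePoints (fun j ↦ j ^ 2) (fun j ↦ j ^ 2) n).filter
          (fun p ↦ Even p.1 ∧ ¬Even p.2), g p := by
  have hsq : IsThetaExponent fun j ↦ j ^ 2 := by simpa using isThetaExponent_mul_sq one_pos
  have h₁ : IsThetaExponent fun j ↦ 4 * j ^ 2 + 1 := by
    simpa using (isThetaExponent_mul_sq (m := 4) (by norm_num)).add_one
  have h₂ : IsThetaExponent fun j ↦ 4 * (j * (j + 1)) := by
    simpa using isThetaExponent_mul_pronic (m := 4) (by norm_num)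
  refine sum_nbij' (fun p ↦ (2 * p.1, 2 * p.2 + 1)) (fun p ↦ (p.1 / 2, p.2 / 2)) ?_ ?_ ?_ ?_
    (fun _ _ ↦ rfl)
  · intro p hp
    simp only [mem_filter, mem_latticePoints h₁ h₂, mem_latticePoints hsq hsq] at hp ⊢
    exact ⟨by linear_combination hp, ⟨p.1, by ring⟩, fun ⟨r, hr⟩ ↦ by omega⟩
  · intro p hp
    simp only [mem_filter, mem_latticePoints h₁ h₂, mem_latticePoints hsq hsq,
      Int.not_even_iff_odd] at hp ⊢
    obtain ⟨hp, ⟨r, hr⟩, s, hs⟩ := hp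
    rw [show p.1 / 2 = r by omega, show p.2 / 2 = s by omega]
    linear_combination hp - (p.1 + 2 * r) * hr - (p.2 + 2 * s + 1) * hs
  · intro p _
    simp only [Prod.ext_iff]
    omega
  · intro p hp
    simp only [mem_filter, Int.not_even_iff_odd] at hp
    obtain ⟨-, ⟨r, hr⟩, s, hs⟩ := hp
    simp only [Prod.ext_iff]
    omega

lemma sum_latticePoints_sq_not_even_add (n : ℕ) :
    ∑ _ ∈ (latticePoints (fun j ↦ j ^ 2) (fun j ↦ j ^ 2) n).filter (fun p ↦ ¬Even (p.1 + p.2)),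
        (1 : ℚ)
      = 2 * ∑ _ ∈ latticePoints (fun j ↦ 4 * j ^ 2 + 1) (fun j ↦ 4 * (j * (j + 1))) n, (1 : ℚ) := by
  rw [← sum_filter_add_sum_filter_not _ fun p ↦ Even p.1, filter_filter, filter_filter,
    sum_latticePoints_swap (fun p ↦ ¬Even (p.1 + p.2) ∧ ¬Even p.1),
    sum_latticePoints_odd n fun _ ↦ 1, two_mul]
  congr 1 <;> refine sum_congr (filter_congr fun p _ ↦ ?_) fun _ _ ↦ rfl
  · rw [Int.even_add]
    tauto
  · simp only [Prod.fst_swap, Prod.snd_swap, Int.even_add]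
    tauto

end Lattice

section ThetaIdentities

lemma neg_one_zpow_mul_neg_one_zpow (a b : ℤ) :
    (-1 : ℚ) ^ a * (-1) ^ b = if Even (a + b) then 1 else -1 := by
  rw [← zpow_add₀ (by norm_num), neg_one_zpow_eq_ite]

lemma sum_neg_one_zpow_mul_neg_one_zpow (s : Finset (ℤ × ℤ)) :
    ∑ p ∈ s, (-1 : ℚ) ^ p.1 * (-1) ^ p.2
      = ∑ _ ∈ s.filter (fun p ↦ Even (p.1 + p.2)), 1
        - ∑ _ ∈ s.filter (fun p ↦ ¬Even (p.1 + p.2)), 1 := by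
  simp only [neg_one_zpow_mul_neg_one_zpow, sum_ite, sum_neg_distrib, sub_eq_add_neg]

lemma neg_one_zpow_eq_neg_of_not_even_add {a b : ℤ} (h : ¬Even (a + b)) :
    (-1 : ℚ) ^ a = -(-1) ^ b := by
  rw [Int.even_add] at h
  rw [neg_one_zpow_eq_ite, neg_one_zpow_eq_ite]
  by_cases ha : Even a <;> by_cases hb : Even b <;> simp [ha, hb] at h ⊢

lemma sum_latticePoints_not_even_add_neg_one_zpow (E : ℤ → ℤ) (n : ℕ) :
    ∑ p ∈ (latticePoints E E n).filter (fun p ↦ ¬Even (p.1 + p.2)), (-1 : ℚ) ^ p.2 = 0 := by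
  have hswap := sum_latticePoints_swap (E := E) (fun p ↦ ¬Even (p.1 + p.2)) n
    fun p ↦ (-1 : ℚ) ^ p.2
  have hneg : ∑ p ∈ (latticePoints E E n).filter (fun p ↦ ¬Even (p.swap.1 + p.swap.2)),
      (-1 : ℚ) ^ p.swap.2
      = -∑ p ∈ (latticePoints E E n).filter (fun p ↦ ¬Even (p.1 + p.2)), (-1 : ℚ) ^ p.2 := by
    rw [← sum_neg_distrib]
    refine sum_congr (filter_congr fun p _ ↦ by rw [Prod.fst_swap, Prod.snd_swap, add_comm])
      fun p hp ↦ neg_one_zpow_eq_neg_of_not_even_add (mem_filter.mp hp).2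
  linarith

theorem phi_mul_phiNeg {m : ℕ} (hm : 0 < m) : phi m * phiNeg m = phiNeg (2 * m) ^ 2 := by
  ext n
  have h₁ := isThetaExponent_mul_sq hm
  have h₂ := isThetaExponent_mul_sq (by omega : 0 < 2 * m)
  rw [phi, phiNeg, phiNeg, sq, coeff_thetaSeries_mul h₁ h₁, coeff_thetaSeries_mul h₂ h₂,
    ← sum_filter_add_sum_filter_not _ fun p ↦ Even (p.1 + p.2)]
  simp only [Pi.one_apply, one_mul]
  rw [sum_latticePoints_not_even_add_neg_one_zpow, add_zero]
  refine (sum_latticePoints_rotate hm n fun p ↦ (-1 : ℚ) ^ p.2).symm.trans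
    (sum_congr rfl fun p _ ↦ ?_)
  by_cases ha : Even p.1 <;> by_cases hb : Even p.2 <;>
    simp [neg_one_zpow_eq_ite, Int.even_sub, ha, hb]

theorem phiNeg_one_sq : phiNeg 1 ^ 2 = phi 2 ^ 2 - 2 * X * (phi 4 * twicePsi 4) := by
  ext n
  have h₁ := isThetaExponent_mul_sq one_pos
  have h₂ := isThetaExponent_mul_sq (m := 2) (by norm_num)
  have h₄ := isThetaExponent_mul_sq (m := 4) (by norm_num)
  have hψ := isThetaExponent_mul_pronic (m := 4) (by norm_num)
  simp only [phi, phiNeg, twicePsi]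
  rw [map_sub, mul_assoc, ← mul_assoc X, X_mul_thetaSeries h₄, two_mul, map_add,
    sq, sq, coeff_thetaSeries_mul h₁ h₁, coeff_thetaSeries_mul h₂ h₂,
    coeff_thetaSeries_mul h₄.add_one hψ]
  have hrot := sum_latticePoints_rotate one_pos n fun _ ↦ 1
  have hodd := sum_latticePoints_sq_not_even_add n
  simp only [Pi.one_apply, mul_one, Nat.cast_one, one_mul, Nat.cast_ofNat] at hrot hodd ⊢
  rw [sum_neg_one_zpow_mul_neg_one_zpow, ← hrot, hodd]
  ring

end ThetaIdentities

section Dissection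

lemma constantCoeff_f {m : ℕ} (hm : 0 < m) : constantCoeff (f m) = 1 := by
  rw [← coeff_zero_eq_constantCoeff_apply, f, coeff_mk]
  simp [hm.ne']

lemma f_pow_four_mul_phi_two_sq : f 2 ^ 4 * f 8 ^ 4 * phi 2 ^ 2 = f 4 ^ 10 := by
  have g₂ := f_sq_eq_mul_phiNeg (m := 2) (by norm_num)
  have g₄ := f_sq_eq_mul_phiNeg (m := 4) (by norm_num)
  have t₂ := phi_mul_phiNeg (m := 2) (by norm_num)
  norm_num at g₂ g₄ t₂
  linear_combination f 8 ^ 4 * phi 2 ^ 2 * (f 2 ^ 2 + f 4 * phiNeg 2) * g₂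
    + f 4 ^ 2 * f 8 ^ 4 * (phi 2 * phiNeg 2 + phiNeg 4 ^ 2) * t₂
    - f 4 ^ 2 * (f 4 ^ 2 + f 8 * phiNeg 4) * (f 4 ^ 4 + (f 8 * phiNeg 4) ^ 2) * g₄

lemma f_sq_mul_phi_mul_twicePsi : f 4 ^ 2 * (phi 4 * twicePsi 4) = 2 * f 8 ^ 4 := by
  have g₄ := f_sq_eq_mul_phiNeg (m := 4) (by norm_num)
  have g₈ := f_sq_eq_mul_phiNeg (m := 8) (by norm_num)
  have t₄ := phi_mul_phiNeg (m := 4) (by norm_num)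
  have ψ₄ := twicePsi_mul_f (m := 4) (by norm_num)
  norm_num at g₄ g₈ t₄ ψ₄
  linear_combination phi 4 * twicePsi 4 * g₄ + f 8 * twicePsi 4 * t₄ + phiNeg 8 ^ 2 * ψ₄
    - 2 * (f 8 ^ 2 + f 16 * phiNeg 8) * g₈

end Dissection

end QSeries

open QSeries in
/-- $f_1^4 = f_4^{10}/(f_2^2 f_8^4) - 4q f_2^2 f_8^4/f_4^2$. -/
theorem dissection_f1_fourth :
    (f 1) ^ 4 =
      (f 4) ^ 10 * ((f 2) ^ 2 * (f 8) ^ 4)⁻¹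
        - 4 * PowerSeries.X * (f 2) ^ 2 * (f 8) ^ 4 * ((f 4) ^ 2)⁻¹ := by
  have hu : (f 2 ^ 2 * f 8 ^ 4)⁻¹ * (f 2 ^ 2 * f 8 ^ 4) = 1 :=
    PowerSeries.inv_mul_cancel _ (by simp [constantCoeff_f])
  have hv : (f 4 ^ 2)⁻¹ * f 4 ^ 2 = 1 := PowerSeries.inv_mul_cancel _ (by simp [constantCoeff_f])
  have g₁ := f_sq_eq_mul_phiNeg (m := 1) one_pos
  norm_num at g₁
  linear_combination (f 1 ^ 2 + f 2 * phiNeg 1) * g₁ + f 2 ^ 2 * phiNeg_one_sq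
    + (f 2 ^ 2 * f 8 ^ 4)⁻¹ * f_pow_four_mul_phi_two_sq
    - 2 * X * f 2 ^ 2 * (f 4 ^ 2)⁻¹ * f_sq_mul_phi_mul_twicePsi
    - f 2 ^ 2 * phi 2 ^ 2 * hu + 2 * X * f 2 ^ 2 * phi 4 * twicePsi 4 * hv
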